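/- arXiv:2406.14901 — 2 statements merged into one kernel-verified Lean document; each statement's English description precedes it below -/
import Mathlib

section
/- MinHash collision probability equals Jaccard similarity: for finite nonempty sets X, Y ⊆ U, if ρ is a uniformly random permutation (or uniformly random injective ranking) of U, and M(X) = min{ρ(x) : x ∈ X}, then Pr(M(X) = M(Y)) = |X ∩ Y| / |X ∪ Y|. -/
/-!
Let `u` be the element of `X ∪ Y` of least rank. Ranks are distinct, so `M(X) = M(Y)` exactly
when `u ∈ X ∩ Y`. Precomposing `ρ` with the transposition of two elements of `X ∪ Y` exchanges
the events "this one has least rank", so `u` is uniformly distributed on `X ∪ Y`.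
-/

open Finset Function

section
variable {α β : Type*} [LinearOrder β]

theorem Finset.min'_image_eq_min'_image_iff [DecidableEq α] [DecidableEq β] {f : α → β}
    (hf : Injective f) {X Y : Finset α} (hX : X.Nonempty) (hY : Y.Nonempty) :
    (X.image f).min' (hX.image f) = (Y.image f).min' (hY.image f) ↔
      ∃ u ∈ X ∩ Y, ∀ a ∈ X ∪ Y, f u ≤ f a := by
  have min'_image_eq {s : Finset α} (hs : s.Nonempty) {x : α} (hx : x ∈ s)
      (hmin : ∀ a ∈ s, f x ≤ f a) : (s.image f).min' (hs.image f) = f x :=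
    (min'_eq_iff _ _ _).2 ⟨mem_image_of_mem f hx, by simpa using hmin⟩
  constructor
  · intro h
    obtain ⟨x, hxX, hx⟩ := X.exists_min_image f hX
    obtain ⟨y, hyY, hy⟩ := Y.exists_min_image f hY
    rw [min'_image_eq hX hxX hx, min'_image_eq hY hyY hy] at h
    obtain rfl := hf h
    refine ⟨x, mem_inter.2 ⟨hxX, hyY⟩, fun a ha => ?_⟩
    rcases mem_union.1 ha with ha | ha
    exacts [hx a ha, hy a ha]
  · rintro ⟨u, hu, hmin⟩
    rw [mem_inter] at hu
    rw [min'_image_eq hX hu.1 fun a ha => hmin a (mem_union_left _ ha),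
      min'_image_eq hY hu.2 fun a ha => hmin a (mem_union_right _ ha)]

variable [Fintype α] [DecidableEq α] [Fintype β] [DecidableEq β]

def rankingsMinAt (S : Finset α) (u : α) : Finset (α ≃ β) :=
  {ρ | ∀ a ∈ S, ρ u ≤ ρ a}

variable {S T : Finset α} {u v : α}

theorem card_rankingsMinAt_eq (hu : u ∈ S) (hv : v ∈ S) :
    #(rankingsMinAt (β := β) S u) = #(rankingsMinAt (β := β) S v) := by
  refine card_equiv ((Equiv.swap u v).equivCongr (Equiv.refl β)) fun ρ => ?_
  simp only [rankingsMinAt, mem_filter, mem_univ, true_and, Equiv.equivCongr_apply_apply,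
    Equiv.symm_swap, Equiv.swap_apply_right, Equiv.refl_apply]
  exact (Equiv.bijOn_swap hu hv).forall

theorem pairwiseDisjoint_rankingsMinAt :
    (S : Set α).PairwiseDisjoint (rankingsMinAt (β := β) S) := by
  intro u hu v hv huv
  refine disjoint_left.2 fun ρ hρu hρv => huv (ρ.injective ?_)
  simp only [rankingsMinAt, mem_filter, mem_univ, true_and] at hρu hρv
  exact le_antisymm (hρu v hv) (hρv u hu)

theorem biUnion_rankingsMinAt (hS : S.Nonempty) :
    S.biUnion (rankingsMinAt (β := β) S) = univ := by
  refine eq_univ_of_forall fun ρ => ?_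
  obtain ⟨u, hu, hmin⟩ := S.exists_min_image ρ hS
  exact mem_biUnion.2 ⟨u, hu, by simpa [rankingsMinAt] using hmin⟩

theorem card_biUnion_rankingsMinAt (hTS : T ⊆ S) (hu : u ∈ S) :
    #(T.biUnion (rankingsMinAt (β := β) S)) = #T * #(rankingsMinAt (β := β) S u) := by
  rw [card_biUnion (pairwiseDisjoint_rankingsMinAt.subset (by exact_mod_cast hTS))]
  exact sum_const_nat fun v hv => card_rankingsMinAt_eq (hTS hv) hu

theorem card_biUnion_rankingsMinAt_div_card [Nonempty (α ≃ β)] (hTS : T ⊆ S)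
    (hS : S.Nonempty) :
    (#(T.biUnion (rankingsMinAt (β := β) S)) : ℚ) / Fintype.card (α ≃ β) = #T / #S := by
  obtain ⟨u, hu⟩ := hS
  have hcard : Fintype.card (α ≃ β) = #S * #(rankingsMinAt (β := β) S u) := by
    rw [← card_univ, ← biUnion_rankingsMinAt ⟨u, hu⟩,
      card_biUnion_rankingsMinAt subset_rfl hu]
  have hfiber : (#(rankingsMinAt (β := β) S u) : ℚ) ≠ 0 := by
    have := hcard ▸ Fintype.card_pos (α := α ≃ β)
    exact_mod_cast (Nat.pos_of_mul_pos_left this).ne'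
  rw [card_biUnion_rankingsMinAt hTS hu, hcard]
  push_cast
  exact mul_div_mul_right _ _ hfiber

end

/-- MinHash collision probability equals Jaccard similarity: for nonempty finite
sets `X, Y ⊆ U` and a uniformly random ranking `ρ : U ≃ Fin |U|`, with
`M(A) = min_{a ∈ A} ρ(a)`, we have `Pr(M(X) = M(Y)) = |X ∩ Y| / |X ∪ Y|`. -/
theorem minhash_collision_eq_jaccard {U : Type*} [Fintype U] [DecidableEq U]
    (X Y : Finset U) (hX : X.Nonempty) (hY : Y.Nonempty) :
    (((Finset.univ : Finset (U ≃ Fin (Fintype.card U))).filter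
        (fun ρ => (X.image fun a => ((ρ a : ℕ))).min' (hX.image _)
                 = (Y.image fun a => ((ρ a : ℕ))).min' (hY.image _))).card : ℚ)
      / (Fintype.card (U ≃ Fin (Fintype.card U)) : ℚ)
      = ((X ∩ Y).card : ℚ) / ((X ∪ Y).card : ℚ) := by
  have : Nonempty (U ≃ Fin (Fintype.card U)) := ⟨Fintype.equivFin U⟩
  have hcollision : ({ρ : U ≃ Fin (Fintype.card U) | (X.image fun a => ((ρ a : ℕ))).min'
      (hX.image _) = (Y.image fun a => ((ρ a : ℕ))).min' (hY.image _)} : Finset _) =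
        (X ∩ Y).biUnion (rankingsMinAt (X ∪ Y)) := by
    ext ρ
    rw [mem_filter, min'_image_eq_min'_image_iff (fun a b h => ρ.injective (Fin.ext h)) hX hY]
    simp [rankingsMinAt]
  rw [hcollision,
    card_biUnion_rankingsMinAt_div_card inter_subset_union (hX.mono subset_union_left)]
end

section
/- Jaccard similarity of consecutive kmers: let x and y be consecutive kmers (windows of length k at positions i and i+1) of a string, with sub-kmer index sets interpreted as sequences; if all k − t + 1 sub-kmers of each kmer are distinct, then the sub-kmer sets X = S(x,t) and Y = S(y,t) satisfy |X ∩ Y| ≥ k − t and |X ∪ Y| ≤ k − t + 2, hence J(X, Y) ≥ (k − t)/(k − t + 2). -/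
/-!
Write `xⱼ` and `yⱼ` for the sub-kmers of `x` and `y` starting at position `j`, and `a = k - t`.
Since `y` is `x` shifted by one, `xⱼ₊₁ = yⱼ` for `j < a`. With `Z = {y₀, …, y_{a-1}}` this gives
`X = insert x₀ Z` and `Y = insert y_a Z`, and `Z` has `a` elements because the `xⱼ` are distinct.
Hence `|X ∩ Y| ≥ a` and `|X ∪ Y| ≤ a + 2`, and the Jaccard bound follows.
-/

open Finset

namespace List

variable {α : Type*}

theorem take_drop_take_of_add_le (l : List α) {j k t : ℕ} (h : j + t ≤ k) :
    ((l.take k).drop j).take t = (l.drop j).take t := by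
  rw [drop_take, take_take, min_eq_left (by omega)]

theorem take_drop_succ_take_eq_take_drop_take_drop_one (l : List α) {j k t : ℕ} (h : j + t < k) :
    ((l.take k).drop (j + 1)).take t = (((l.drop 1).take k).drop j).take t := by
  rw [take_drop_take_of_add_le l (by omega), take_drop_take_of_add_le _ (by omega), drop_drop,
    Nat.add_comm]

theorem map_range_succ_eq_cons (f : ℕ → α) (n : ℕ) :
    (range (n + 1)).map f = f 0 :: (range n).map fun j => f (j + 1) := by
  rw [range_succ_eq_map, map_cons, map_map]
  rfl

theorem toFinset_map_range_succ [DecidableEq α] (f : ℕ → α) (n : ℕ) :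
    ((range (n + 1)).map f).toFinset = insert (f n) ((range n).map f).toFinset := by
  rw [range_succ, map_append, toFinset_append, map_singleton, toFinset_cons, toFinset_nil,
    insert_empty_eq, Finset.union_singleton]

end List

namespace Finset

variable {β : Type*} [DecidableEq β]

theorem card_le_card_insert_inter_insert (u v : β) (Z : Finset β) :
    #Z ≤ #(insert u Z ∩ insert v Z) :=
  card_le_card (subset_inter (subset_insert u Z) (subset_insert v Z))

theorem card_insert_union_insert_le (u v : β) (Z : Finset β) :
    #(insert u Z ∪ insert v Z) ≤ #Z + 2 := by
  rw [insert_union, union_insert, union_self]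
  exact (card_insert_le u _).trans (Nat.add_le_add_right (card_insert_le v Z) 1)

end Finset

theorem cast_div_add_two_le_cast_div {a p q : ℕ} (hpq : p ≤ q) (hap : a ≤ p) (hqa : q ≤ a + 2) :
    (a : ℚ) / ((a : ℚ) + 2) ≤ (p : ℚ) / (q : ℚ) := by
  -- `p / 0 = 0` in `ℚ`, but then `a = 0` as well
  rcases Nat.eq_zero_or_pos q with rfl | hq
  · obtain rfl : a = 0 := by omega
    simp
  calc (a : ℚ) / ((a : ℚ) + 2) ≤ (a : ℚ) / (q : ℚ) :=
        div_le_div_of_nonneg_left (by positivity) (by exact_mod_cast hq) (by exact_mod_cast hqa)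
    _ ≤ (p : ℚ) / (q : ℚ) := div_le_div_of_nonneg_right (by exact_mod_cast hap) (by positivity)

theorem consecutive_kmer_jaccard_general {α : Type*} [DecidableEq α]
    (G : List α) (k t i : ℕ)
    (x y : List α) (hx : x = (G.drop i).take k) (hy : y = (G.drop (i + 1)).take k)
    (X Y : Finset (List α))
    (hX : X = ((List.range (k - t + 1)).map fun j => (x.drop j).take t).toFinset)
    (hY : Y = ((List.range (k - t + 1)).map fun j => (y.drop j).take t).toFinset)
    -- all sub-kmers of each kmer are pairwise distinct
    (hxnodup : ((List.range (k - t + 1)).map fun j => (x.drop j).take t).Nodup) :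
    k - t ≤ (X ∩ Y).card ∧
    (X ∪ Y).card ≤ k - t + 2 ∧
    (((k - t : ℕ) : ℚ)) / (((k - t : ℕ) : ℚ) + 2)
      ≤ ((X ∩ Y).card : ℚ) / ((X ∪ Y).card : ℚ) := by
  set Z := (List.range (k - t)).map fun j => (y.drop j).take t
  have hshift : ((List.range (k - t)).map fun j => (x.drop (j + 1)).take t) = Z :=
    List.map_congr_left fun j hj => by
      rw [hx, hy, ← List.drop_drop (i := 1) (j := i)]
      exact List.take_drop_succ_take_eq_take_drop_take_drop_one _ (by grind)
  have hXZ : X = insert ((x.drop 0).take t) Z.toFinset := by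
    rw [hX, List.map_range_succ_eq_cons, hshift, List.toFinset_cons]
  have hYZ : Y = insert ((y.drop (k - t)).take t) Z.toFinset := by
    rw [hY, List.toFinset_map_range_succ]
  have hZ : #Z.toFinset = k - t := by
    rw [List.map_range_succ_eq_cons, hshift] at hxnodup
    rw [List.toFinset_card_of_nodup hxnodup.of_cons, List.length_map, List.length_range]
  have hinter : k - t ≤ #(X ∩ Y) := hXZ ▸ hYZ ▸ hZ ▸ card_le_card_insert_inter_insert _ _ _
  have hunion : #(X ∪ Y) ≤ k - t + 2 := hXZ ▸ hYZ ▸ hZ ▸ card_insert_union_insert_le _ _ _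
  exact ⟨hinter, hunion, cast_div_add_two_le_cast_div (card_le_card inter_subset_union) hinter hunion⟩

/-- Jaccard similarity of consecutive kmers: if `x = G[i : i+k]` and
`y = G[i+1 : i+1+k]` are consecutive windows and all `k − t + 1` length-`t`
sub-kmers of each are pairwise distinct, then their sub-kmer sets `X, Y`
satisfy `|X ∩ Y| ≥ k − t`, `|X ∪ Y| ≤ k − t + 2`, and hence
`J(X, Y) ≥ (k − t)/(k − t + 2)`. -/
theorem consecutive_kmer_jaccard {α : Type*} [DecidableEq α]
    (G : List α) (k t i : ℕ) (ht : 0 < t) (htk : t ≤ k)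
    (hiG : i + 1 + k ≤ G.length)
    (x y : List α) (hx : x = (G.drop i).take k) (hy : y = (G.drop (i + 1)).take k)
    (X Y : Finset (List α))
    (hX : X = ((List.range (k - t + 1)).map fun j => (x.drop j).take t).toFinset)
    (hY : Y = ((List.range (k - t + 1)).map fun j => (y.drop j).take t).toFinset)
    -- all sub-kmers of each kmer are pairwise distinct
    (hxnodup : ((List.range (k - t + 1)).map fun j => (x.drop j).take t).Nodup)
    (hynodup : ((List.range (k - t + 1)).map fun j => (y.drop j).take t).Nodup) :
    k - t ≤ (X ∩ Y).card ∧
    (X ∪ Y).card ≤ k - t + 2 ∧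
    (((k - t : ℕ) : ℚ)) / (((k - t : ℕ) : ℚ) + 2)
      ≤ ((X ∩ Y).card : ℚ) / ((X ∪ Y).card : ℚ) :=
  consecutive_kmer_jaccard_general G k t i x y hx hy X Y hX hY hxnodup
end
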